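/- Let L > 0 and let ψ : ℝ → ℝ be a C², L-periodic function with ψ(x) > 0 for all x, satisfying ψ''(x) − ψ(x) + ψ(x)² = 0 for all x ∈ ℝ. Then for every C¹, L-periodic function f : ℝ → ℝ one has ∫₀^L ( f'(x)² + f(x)² − ψ(x) f(x)² ) dx ≥ 0. (That is, the quadratic form of the operator L₂ = −d²/dx² + 1 − ψ is nonnegative on L-periodic functions.) -/

import Mathlib

/-- Nonnegativity of the quadratic form of `L₂ = −d²/dx² + 1 − ψ` on `L`-periodic
functions, where `ψ > 0` is a `C²`, `L`-periodic solution of `ψ'' − ψ + ψ² = 0`. -/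
theorem stmt_12 (L : ℝ) (hL : 0 < L) (ψ : ℝ → ℝ)
    (hψ : ContDiff ℝ 2 ψ) (hper : Function.Periodic ψ L) (hpos : ∀ x, 0 < ψ x)
    (hode : ∀ x, deriv (deriv ψ) x - ψ x + ψ x ^ 2 = 0) :
    ∀ f : ℝ → ℝ, ContDiff ℝ 1 f → Function.Periodic f L →
      0 ≤ ∫ x in (0 : ℝ)..L, (deriv f x ^ 2 + f x ^ 2 - ψ x * f x ^ 2) := by
  intro f hf hfper
  have hψd : Differentiable ℝ ψ := hψ.differentiable (by norm_num)
  have hψ1 : ContDiff ℝ 1 (deriv ψ) := by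
    have := (contDiff_succ_iff_deriv (n := 1)).mp (by exact_mod_cast hψ)
    exact this.2.2
  have hψ'd : Differentiable ℝ (deriv ψ) := hψ1.differentiable one_ne_zero
  have hfd : Differentiable ℝ f := hf.differentiable one_ne_zero
  set u : ℝ → ℝ := fun x => deriv ψ x * f x ^ 2 / ψ x with hu_def
  set w : ℝ → ℝ := fun x =>
    ((deriv (deriv ψ) x * f x ^ 2 + deriv ψ x * ((2 : ℕ) * f x ^ 1 * deriv f x)) * ψ x
        - deriv ψ x * f x ^ 2 * deriv ψ x) / ψ x ^ 2 with hw_def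
  have hu : ∀ x, HasDerivAt u (w x) x := by
    intro x
    exact (((hψ'd x).hasDerivAt.mul ((hfd x).hasDerivAt.pow 2)).div (hψd x).hasDerivAt
      (hpos x).ne')
  have hderiv_u : deriv u = w := funext fun x => (hu x).deriv
  have hc_f' : Continuous (deriv f) := hf.continuous_deriv le_rfl
  have hc_ψ'' : Continuous (deriv (deriv ψ)) := hψ1.continuous_deriv le_rfl
  have hw_cont : Continuous w := by
    apply Continuous.div
    · exact (((hc_ψ''.mul (hfd.continuous.pow 2)).add
        (hψ'd.continuous.mul ((continuous_const.mul (hfd.continuous.pow 1)).mul hc_f'))).mul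
          hψd.continuous).sub ((hψ'd.continuous.mul (hfd.continuous.pow 2)).mul hψ'd.continuous)
    · exact hψd.continuous.pow 2
    · exact fun x => pow_ne_zero 2 (hpos x).ne'
  set s : ℝ → ℝ := fun x => (deriv f x - f x * deriv ψ x / ψ x) ^ 2 with hs_def
  have hs_cont : Continuous s := by
    apply Continuous.pow
    exact hc_f'.sub ((hfd.continuous.mul hψ'd.continuous).div hψd.continuous
      fun x => (hpos x).ne')
  have key : ∀ x, deriv f x ^ 2 + f x ^ 2 - ψ x * f x ^ 2 = s x + w x := by
    intro x
    have hps : ψ x ≠ 0 := (hpos x).ne'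
    have ho : deriv (deriv ψ) x = ψ x - ψ x ^ 2 := by have := hode x; linarith
    simp only [hs_def, hw_def, ho]
    field_simp
    ring
  have hint_u : (∫ x in (0 : ℝ)..L, deriv u x) = 0 := by
    rw [intervalIntegral.integral_deriv_eq_sub (fun x _ => (hu x).differentiableAt)
      (by rw [hderiv_u]; exact hw_cont.intervalIntegrable 0 L)]
    have h1 : ψ L = ψ 0 := by simpa using hper 0
    have h2 : deriv ψ L = deriv ψ 0 := by
      have he : (fun y => ψ (y + L)) = ψ := funext fun y => hper y
      have := deriv_comp_add_const ψ L 0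
      rw [he] at this
      simpa using this.symm
    have h3 : f L = f 0 := by simpa using hfper 0
    simp [hu_def, h1, h2, h3]
  have hsplit : (∫ x in (0 : ℝ)..L, (deriv f x ^ 2 + f x ^ 2 - ψ x * f x ^ 2))
      = (∫ x in (0 : ℝ)..L, s x) + ∫ x in (0 : ℝ)..L, deriv u x := by
    rw [hderiv_u, ← intervalIntegral.integral_add (hs_cont.intervalIntegrable 0 L)
      (hw_cont.intervalIntegrable 0 L)]
    exact intervalIntegral.integral_congr fun x _ => key x
  rw [hsplit, hint_u, add_zero]
  exact intervalIntegral.integral_nonneg hL.le fun x _ => sq_nonneg _
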